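/- arXiv:1412.8057 — 2 statements merged into one kernel-verified Lean document; each statement's English description precedes it below -/
import Mathlib

section
/- For 0 < L ≤ U/2, the sum S1 = Σ over n1 ∈ [N1, 2N1), n2 ∈ [N2, 2N2), m1, m2 ∈ [U-L, U+L] with n1·m1 = n2·m2 of 1/(n1^{1/2} n2^{1/2} m1^{1/2} m2^{1/2}) satisfies S1 ≪ ((L + U^{1/2})/U) · log²(N1·N2·U). -/
open Finset

private lemma aux_count (s : Finset ℕ) (g : ℕ) (hg : 1 ≤ g) (α β : ℝ) (h0 : 0 ≤ α) (hαβ : α ≤ β)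
    (hs : ∀ n ∈ s, α ≤ (n:ℝ) ∧ (n:ℝ) ≤ β) :
    ((s.filter (g ∣ ·)).card : ℝ) ≤ (β - α)/g + 1 := by
  have hgR : (0:ℝ) < g := by exact_mod_cast hg
  have hβ : 0 ≤ β := h0.trans hαβ
  have hβα : 0 ≤ β - α := by linarith
  have hcard : (s.filter (g ∣ ·)).card ≤ (Finset.Icc ⌈α/g⌉₊ ⌊β/g⌋₊).card := by
    apply Finset.card_le_card_of_injOn (fun n => n / g)
    · intro n hn
      simp only [Finset.mem_coe, Finset.mem_filter] at hn ⊢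
      obtain ⟨hns, hdvd⟩ := hn
      obtain ⟨hl, hr⟩ := hs n hns
      obtain ⟨k, rfl⟩ := hdvd
      rw [Nat.mul_div_cancel_left _ hg]
      simp only [Finset.mem_Icc]
      constructor
      · rw [Nat.ceil_le, div_le_iff₀ hgR]
        calc α ≤ ((g*k:ℕ):ℝ) := hl
        _ = (k:ℝ)*g := by push_cast; ring
      · rw [Nat.le_floor_iff (div_nonneg hβ hgR.le), le_div_iff₀ hgR]
        calc (k:ℝ)*g = ((g*k:ℕ):ℝ) := by push_cast; ring
        _ ≤ β := hr
    · intro a ha b hb hab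
      simp only [Finset.mem_coe, Finset.mem_filter] at ha hb
      obtain ⟨-, ka, rfl⟩ := ha
      obtain ⟨-, kb, rfl⟩ := hb
      simp only [Nat.mul_div_cancel_left _ hg] at hab
      rw [hab]
  calc ((s.filter (g ∣ ·)).card : ℝ) ≤ ((Finset.Icc ⌈α/g⌉₊ ⌊β/g⌋₊).card : ℝ) := by exact_mod_cast hcard
  _ ≤ (β - α)/g + 1 := by
      rw [Nat.card_Icc]
      rcases le_or_gt (⌈α/g⌉₊ : ℕ) (⌊β/g⌋₊ + 1) with h | h
      · rw [Nat.cast_sub h]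
        have h1 : (⌊β/g⌋₊ : ℝ) ≤ β/g := Nat.floor_le (div_nonneg hβ hgR.le)
        have h2 : α/g ≤ (⌈α/g⌉₊ : ℝ) := Nat.le_ceil _
        push_cast
        rw [sub_div]
        linarith
      · rw [Nat.sub_eq_zero_of_le h.le]
        have : 0 ≤ (β - α)/g := div_nonneg hβα hgR.le
        push_cast
        linarith

private lemma aux_harm (G : ℕ) : ∑ g ∈ Finset.Icc 1 G, (1:ℝ)/g ≤ 1 + Real.log G := by
  have : ∑ g ∈ Finset.Icc 1 G, (1:ℝ)/g = (harmonic G : ℝ) := by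
    rw [harmonic_eq_sum_Icc]
    push_cast
    simp [one_div]
  rw [this]
  exact harmonic_le_one_add_log G

private lemma aux_rpow (n1 n2 m1 m2 : ℕ) (h1 : 1 ≤ n1) (h2 : 1 ≤ n2) (h3 : 1 ≤ m1) (h4 : 1 ≤ m2)
    (heq : n1 * m1 = n2 * m2) :
    (n1 : ℝ) ^ (1/2 : ℝ) * (n2 : ℝ) ^ (1/2 : ℝ) * (m1 : ℝ) ^ (1/2 : ℝ) * (m2 : ℝ) ^ (1/2 : ℝ)
      = (n1 : ℝ) * m1 := by
  have hn1 : (0:ℝ) ≤ n1 := by positivity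
  have hn2 : (0:ℝ) ≤ n2 := by positivity
  have hm1 : (0:ℝ) ≤ m1 := by positivity
  have hm2 : (0:ℝ) ≤ m2 := by positivity
  have h5 : (n1:ℝ) * m1 = (n2:ℝ) * m2 := by exact_mod_cast heq
  have key : (n1 : ℝ) ^ (1/2 : ℝ) * (n2 : ℝ) ^ (1/2 : ℝ) * (m1 : ℝ) ^ (1/2 : ℝ) * (m2 : ℝ) ^ (1/2 : ℝ)
      = ((n1:ℝ)*m1) ^ (1/2 : ℝ) * ((n2:ℝ)*m2) ^ (1/2 : ℝ) := by
    rw [Real.mul_rpow hn1 hm1, Real.mul_rpow hn2 hm2]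
    ring
  have hpos : (0:ℝ) < (n1:ℝ) * m1 := by
    have e1 : (1:ℝ) ≤ (n1:ℝ) := by exact_mod_cast h1
    have e2 : (1:ℝ) ≤ (m1:ℝ) := by exact_mod_cast h3
    nlinarith
  rw [key, ← h5, ← Real.rpow_add hpos]
  norm_num

private lemma aux_collapse (s : Finset ℕ) (n1 m1 m2 : ℕ) (hm1 : 1 ≤ m1) (hm2 : 1 ≤ m2)
    (c : ℝ) (hc : 0 ≤ c) :
    ∑ n2 ∈ s, (if n1 * m1 = n2 * m2 then c else 0)
      ≤ if (m2 / Nat.gcd m1 m2) ∣ n1 then c else 0 := by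
  rw [← Finset.sum_filter, Finset.sum_const]
  by_cases hdvd : (m2 / Nat.gcd m1 m2) ∣ n1
  · rw [if_pos hdvd]
    have hcard : (s.filter (fun n2 => n1 * m1 = n2 * m2)).card ≤ 1 := by
      rw [Finset.card_le_one]
      intro a ha b hb
      simp only [Finset.mem_filter] at ha hb
      have : a * m2 = b * m2 := by omega
      exact Nat.eq_of_mul_eq_mul_right hm2 this
    calc ((s.filter (fun n2 => n1 * m1 = n2 * m2)).card : ℕ) • c
        ≤ (1 : ℕ) • c := by
          apply smul_le_smul_of_nonneg_right _ hc
          exact_mod_cast hcard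
      _ = c := by simp
  · rw [if_neg hdvd]
    have : (s.filter (fun n2 => n1 * m1 = n2 * m2)) = ∅ := by
      rw [Finset.filter_eq_empty_iff]
      intro n2 _
      intro heq
      apply hdvd
      set g := Nat.gcd m1 m2 with hg
      have hgpos : 0 < g := Nat.gcd_pos_of_pos_left _ hm1
      have hp : g ∣ m1 := Nat.gcd_dvd_left _ _
      have hq : g ∣ m2 := Nat.gcd_dvd_right _ _
      have hcop : Nat.Coprime (m1 / g) (m2 / g) := Nat.coprime_div_gcd_div_gcd hgpos
      have h1 : n1 * (m1 / g) = n2 * (m2 / g) := by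
        apply Nat.eq_of_mul_eq_mul_right hgpos
        calc n1 * (m1 / g) * g = n1 * (m1 / g * g) := by ring
          _ = n1 * m1 := by rw [Nat.div_mul_cancel hp]
          _ = n2 * m2 := heq
          _ = n2 * (m2 / g * g) := by rw [Nat.div_mul_cancel hq]
          _ = n2 * (m2 / g) * g := by ring
      have : (m2 / g) ∣ n1 * (m1 / g) := ⟨n2, by rw [h1]; ring⟩
      exact (Nat.Coprime.dvd_of_dvd_mul_right hcop.symm this)
    rw [this]
    simp

private lemma aux_H (N1 : ℝ) (hN1 : 2 ≤ N1) (q : ℕ) (hq : 1 ≤ q) :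
    ∑ n ∈ Finset.Ico ⌈N1⌉₊ ⌈2*N1⌉₊, (if q ∣ n then 1/(n:ℝ) else 0)
      ≤ (3/2) * (1/(q:ℝ)) + (if (q:ℝ) < (⌈2*N1⌉₊:ℕ) then 1/N1 else 0) := by
  set A := ⌈N1⌉₊ with hA
  set B := ⌈2*N1⌉₊ with hB
  have hN0 : (0:ℝ) < N1 := by linarith
  have hAge : N1 ≤ (A:ℝ) := Nat.le_ceil _
  have hAlt : (A:ℝ) < N1 + 1 := Nat.ceil_lt_add_one (by linarith)
  have hBge : 2*N1 ≤ (B:ℝ) := Nat.le_ceil _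
  have hBlt : (B:ℝ) < 2*N1 + 1 := Nat.ceil_lt_add_one (by linarith)
  have hqR : (0:ℝ) < q := by exact_mod_cast hq
  by_cases hcase : (q:ℝ) < (B:ℕ)
  · rw [if_pos hcase]
    have hAB : (A:ℝ) ≤ (B:ℝ) - 1 := by linarith
    rw [← Finset.sum_filter]
    have hcard : (((Finset.Ico A B).filter (q ∣ ·)).card : ℝ) ≤ ((B:ℝ) - 1 - A)/q + 1 := by
      apply aux_count _ _ hq _ _ (by linarith) hAB
      intro n hn
      rw [Finset.mem_Ico] at hn
      constructor
      · exact_mod_cast Nat.cast_le.mpr hn.1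
      · have h' : n + 1 ≤ B := hn.2
        have : ((n+1:ℕ):ℝ) ≤ B := by exact_mod_cast h'
        push_cast at this; linarith
    have hbound : ∀ n ∈ (Finset.Ico A B).filter (q ∣ ·), (1:ℝ)/n ≤ 1/A := by
      intro n hn
      simp only [Finset.mem_filter, Finset.mem_Ico] at hn
      have h1 : (A:ℝ) ≤ n := by exact_mod_cast hn.1.1
      apply one_div_le_one_div_of_le (by linarith) h1
    calc ∑ n ∈ (Finset.Ico A B).filter (q ∣ ·), (1:ℝ)/n
        ≤ ((Finset.Ico A B).filter (q ∣ ·)).card • ((1:ℝ)/A) :=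
          Finset.sum_le_card_nsmul _ _ _ hbound
      _ = (((Finset.Ico A B).filter (q ∣ ·)).card : ℝ) * (1/A) := by
          rw [nsmul_eq_mul]
      _ ≤ (((B:ℝ) - 1 - A)/q + 1) * (1/A) := by
          apply mul_le_mul_of_nonneg_right hcard (by positivity)
      _ = ((B:ℝ) - 1 - A)/A * (1/q) + 1/A := by ring
      _ ≤ (3/2) * (1/(q:ℝ)) + 1/N1 := by
          have h1 : ((B:ℝ) - 1 - A)/A ≤ 3/2 := by
            rw [div_le_iff₀ (by linarith)]
            linarith
          have h2 : (1:ℝ)/A ≤ 1/N1 := one_div_le_one_div_of_le hN0 hAge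
          have h3 : (0:ℝ) ≤ 1/q := by positivity
          nlinarith
  · rw [if_neg hcase]
    have hzero : ∑ n ∈ Finset.Ico A B, (if q ∣ n then 1/(n:ℝ) else 0) = 0 := by
      apply Finset.sum_eq_zero
      intro n hn
      rw [Finset.mem_Ico] at hn
      rw [if_neg]
      intro hdvd
      have hn1 : 1 ≤ n := by
        have h2 : (2:ℝ) ≤ (A:ℝ) := by linarith
        have : (2:ℕ) ≤ A := by exact_mod_cast h2
        omega
      have := Nat.le_of_dvd (by omega) hdvd
      have hqB : B ≤ q := by exact_mod_cast not_lt.mp hcase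
      omega
    rw [hzero]
    positivity

private lemma aux_swap4 {M : Type*} [AddCommMonoid M] (s1 s2 s3 s4 : Finset ℕ)
    (f : ℕ → ℕ → ℕ → ℕ → M) :
    ∑ a ∈ s1, ∑ b ∈ s2, ∑ c ∈ s3, ∑ d ∈ s4, f a b c d
      = ∑ c ∈ s3, ∑ d ∈ s4, ∑ a ∈ s1, ∑ b ∈ s2, f a b c d := by
  calc ∑ a ∈ s1, ∑ b ∈ s2, ∑ c ∈ s3, ∑ d ∈ s4, f a b c d
      = ∑ a ∈ s1, ∑ c ∈ s3, ∑ b ∈ s2, ∑ d ∈ s4, f a b c d :=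
        Finset.sum_congr rfl (fun a _ => Finset.sum_comm)
    _ = ∑ c ∈ s3, ∑ a ∈ s1, ∑ b ∈ s2, ∑ d ∈ s4, f a b c d := Finset.sum_comm
    _ = ∑ c ∈ s3, ∑ a ∈ s1, ∑ d ∈ s4, ∑ b ∈ s2, f a b c d :=
        Finset.sum_congr rfl (fun c _ => Finset.sum_congr rfl (fun a _ => Finset.sum_comm))
    _ = ∑ c ∈ s3, ∑ d ∈ s4, ∑ a ∈ s1, ∑ b ∈ s2, f a b c d :=
        Finset.sum_congr rfl (fun c _ => Finset.sum_comm)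

set_option maxHeartbeats 1000000 in
open Finset in
theorem stmt_1 :
    ∃ C : ℝ, 0 < C ∧ ∀ N1 N2 U L : ℝ, 2 ≤ N1 → 2 ≤ N2 → 2 ≤ U → 0 < L → L ≤ U / 2 →
      ∑ n1 ∈ Finset.Ico ⌈N1⌉₊ ⌈2 * N1⌉₊,
        ∑ n2 ∈ Finset.Ico ⌈N2⌉₊ ⌈2 * N2⌉₊,
          ∑ m1 ∈ Finset.Icc ⌈U - L⌉₊ ⌊U + L⌋₊,
            ∑ m2 ∈ Finset.Icc ⌈U - L⌉₊ ⌊U + L⌋₊,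
              (if n1 * m1 = n2 * m2 then
                1 / ((n1 : ℝ) ^ (1/2 : ℝ) * (n2 : ℝ) ^ (1/2 : ℝ) *
                     (m1 : ℝ) ^ (1/2 : ℝ) * (m2 : ℝ) ^ (1/2 : ℝ))
              else 0)
        ≤ C * ((L + U ^ (1/2 : ℝ)) / U) * Real.log (N1 * N2 * U) ^ 2 := by
  refine ⟨1000, by norm_num, ?_⟩
  intro N1 N2 U L hN1 hN2 hU hL hLU
  -- notation
  set J1 := Finset.Ico ⌈N1⌉₊ ⌈2 * N1⌉₊ with hJ1
  set J2 := Finset.Ico ⌈N2⌉₊ ⌈2 * N2⌉₊ with hJ2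
  set I := Finset.Icc ⌈U - L⌉₊ ⌊U + L⌋₊ with hI
  -- basic positivity facts
  have hU0 : (0:ℝ) < U := by linarith
  have hUL1 : (1:ℝ) ≤ U - L := by linarith
  have hULpos : (0:ℝ) < U - L := by linarith
  have hN10 : (0:ℝ) < N1 := by linarith
  have hN20 : (0:ℝ) < N2 := by linarith
  have hmem_I : ∀ m ∈ I, U - L ≤ (m:ℝ) ∧ (m:ℝ) ≤ U + L := by
    intro m hm
    rw [hI, Finset.mem_Icc] at hm
    constructor
    · calc U - L ≤ (⌈U - L⌉₊:ℝ) := Nat.le_ceil _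
        _ ≤ (m:ℝ) := by exact_mod_cast hm.1
    · calc (m:ℝ) ≤ (⌊U + L⌋₊:ℝ) := by exact_mod_cast hm.2
        _ ≤ U + L := Nat.floor_le (by linarith)
  have hmem_I1 : ∀ m ∈ I, 1 ≤ m := by
    intro m hm
    have := (hmem_I m hm).1
    have : (1:ℝ) ≤ (m:ℝ) := by linarith
    exact_mod_cast this
  have hmem_I_half : ∀ m ∈ I, U/2 ≤ (m:ℝ) := by
    intro m hm
    have := (hmem_I m hm).1
    linarith
  have hmem_J1 : ∀ n ∈ J1, 1 ≤ n := by
    intro n hn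
    rw [hJ1, Finset.mem_Ico] at hn
    have h1 : (2:ℝ) ≤ (⌈N1⌉₊:ℝ) := le_trans hN1 (Nat.le_ceil _)
    have h2 : (2:ℕ) ≤ ⌈N1⌉₊ := by exact_mod_cast h1
    omega
  have hmem_J2 : ∀ n ∈ J2, 1 ≤ n := by
    intro n hn
    rw [hJ2, Finset.mem_Ico] at hn
    have h1 : (2:ℝ) ≤ (⌈N2⌉₊:ℝ) := le_trans hN2 (Nat.le_ceil _)
    have h2 : (2:ℕ) ≤ ⌈N2⌉₊ := by exact_mod_cast h1
    omega
  -- the bounding function of the gcd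
  set F : ℕ → ℝ := fun g => (2/U) * (3*(g:ℝ)/U + (if U/(5*N1) < (g:ℝ) then 1/N1 else 0)) with hF
  have hFnn : ∀ g : ℕ, 0 ≤ F g := by
    intro g
    show (0:ℝ) ≤ (2/U) * (3*(g:ℝ)/U + (if U/(5*N1) < (g:ℝ) then 1/N1 else 0))
    apply mul_nonneg (by positivity)
    apply add_nonneg (by positivity)
    split_ifs
    · positivity
    · exact le_rfl
  -- Step A: reduce to the gcd-sum over (m1, m2)
  have mainA : (∑ n1 ∈ J1, ∑ n2 ∈ J2, ∑ m1 ∈ I, ∑ m2 ∈ I,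
        (if n1 * m1 = n2 * m2 then
          1 / ((n1 : ℝ) ^ (1/2 : ℝ) * (n2 : ℝ) ^ (1/2 : ℝ) *
               (m1 : ℝ) ^ (1/2 : ℝ) * (m2 : ℝ) ^ (1/2 : ℝ)) else 0))
      ≤ ∑ m1 ∈ I, ∑ m2 ∈ I, F (Nat.gcd m1 m2) := by
    calc (∑ n1 ∈ J1, ∑ n2 ∈ J2, ∑ m1 ∈ I, ∑ m2 ∈ I,
        (if n1 * m1 = n2 * m2 then
          1 / ((n1 : ℝ) ^ (1/2 : ℝ) * (n2 : ℝ) ^ (1/2 : ℝ) *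
               (m1 : ℝ) ^ (1/2 : ℝ) * (m2 : ℝ) ^ (1/2 : ℝ)) else 0))
        ≤ ∑ n1 ∈ J1, ∑ n2 ∈ J2, ∑ m1 ∈ I, ∑ m2 ∈ I,
            (if n1 * m1 = n2 * m2 then 1 / ((n1:ℝ) * (m1:ℝ)) else 0) := by
          apply Finset.sum_le_sum; intro n1 hn1
          apply Finset.sum_le_sum; intro n2 hn2
          apply Finset.sum_le_sum; intro m1 hm1
          apply Finset.sum_le_sum; intro m2 hm2
          split_ifs with h
          · rw [aux_rpow n1 n2 m1 m2 (hmem_J1 n1 hn1) (hmem_J2 n2 hn2)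
              (hmem_I1 m1 hm1) (hmem_I1 m2 hm2) h]
          · exact le_rfl
      _ = ∑ m1 ∈ I, ∑ m2 ∈ I, ∑ n1 ∈ J1, ∑ n2 ∈ J2,
            (if n1 * m1 = n2 * m2 then 1 / ((n1:ℝ) * (m1:ℝ)) else 0) :=
          aux_swap4 J1 J2 I I _
      _ ≤ ∑ m1 ∈ I, ∑ m2 ∈ I, F (Nat.gcd m1 m2) := by
          apply Finset.sum_le_sum; intro m1 hm1
          apply Finset.sum_le_sum; intro m2 hm2
          have hm1p : 1 ≤ m1 := hmem_I1 m1 hm1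
          have hm2p : 1 ≤ m2 := hmem_I1 m2 hm2
          have hm1R : U/2 ≤ (m1:ℝ) := hmem_I_half m1 hm1
          have hm2R : U/2 ≤ (m2:ℝ) := hmem_I_half m2 hm2
          have hm1R0 : (0:ℝ) < m1 := by linarith
          have hm2R0 : (0:ℝ) < m2 := by linarith
          set g := Nat.gcd m1 m2 with hgdef
          set q := m2 / g with hqdef
          have hgpos : 0 < g := Nat.gcd_pos_of_pos_left _ hm1p
          have hgR : (0:ℝ) < g := by exact_mod_cast hgpos
          have hgdvd : g ∣ m2 := Nat.gcd_dvd_right _ _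
          have hq1 : 1 ≤ q := (Nat.one_le_div_iff hgpos).mpr (Nat.le_of_dvd (by omega) hgdvd)
          have hqR : (0:ℝ) < q := by exact_mod_cast hq1
          have hqcast : (q:ℝ) = (m2:ℝ)/(g:ℝ) := Nat.cast_div hgdvd (ne_of_gt hgR)
          have hH := aux_H N1 hN1 q hq1
          have hHnn : (0:ℝ) ≤ ∑ n ∈ J1, (if q ∣ n then 1/(n:ℝ) else 0) := by
            apply Finset.sum_nonneg; intro n hn
            split_ifs
            · positivity
            · exact le_rfl
          calc ∑ n1 ∈ J1, ∑ n2 ∈ J2, (if n1 * m1 = n2 * m2 then 1 / ((n1:ℝ) * (m1:ℝ)) else 0)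
              ≤ ∑ n1 ∈ J1, (if q ∣ n1 then 1 / ((n1:ℝ) * (m1:ℝ)) else 0) := by
                apply Finset.sum_le_sum; intro n1 hn1
                exact aux_collapse J2 n1 m1 m2 hm1p hm2p _ (by positivity)
            _ = (1/(m1:ℝ)) * ∑ n ∈ J1, (if q ∣ n then 1/(n:ℝ) else 0) := by
                rw [Finset.mul_sum]
                apply Finset.sum_congr rfl; intro n hn
                split_ifs
                · rw [mul_comm (n:ℝ) (m1:ℝ), ← one_div_mul_one_div]
                · ring
            _ ≤ (2/U) * ∑ n ∈ J1, (if q ∣ n then 1/(n:ℝ) else 0) := by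
                apply mul_le_mul_of_nonneg_right _ hHnn
                calc (1:ℝ)/m1 ≤ 1/(U/2) := one_div_le_one_div_of_le (by linarith) hm1R
                  _ = 2/U := by rw [one_div_div]
            _ ≤ (2/U) * ((3/2) * (1/(q:ℝ)) + (if (q:ℝ) < (⌈2*N1⌉₊:ℕ) then 1/N1 else 0)) := by
                apply mul_le_mul_of_nonneg_left _ (by positivity)
                exact hH
            _ ≤ F g := by
                show _ ≤ (2/U) * (3*(g:ℝ)/U + (if U/(5*N1) < (g:ℝ) then 1/N1 else 0))
                apply mul_le_mul_of_nonneg_left _ (by positivity)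
                apply add_le_add
                · rw [hqcast, one_div_div]
                  calc (3/2) * ((g:ℝ)/m2) ≤ (3/2) * ((g:ℝ)/(U/2)) := by
                        apply mul_le_mul_of_nonneg_left _ (by norm_num)
                        exact div_le_div_of_nonneg_left hgR.le (by linarith) hm2R
                    _ = 3*(g:ℝ)/U := by
                        field_simp
                · split_ifs with hc hd
                  · exact le_rfl
                  · exfalso; apply hd
                    rw [hqcast] at hc
                    have h1 : (m2:ℝ) < (⌈2*N1⌉₊:ℝ) * g := (div_lt_iff₀ hgR).mp hc
                    have hB1lt : (⌈2*N1⌉₊:ℝ) < 2*N1 + 1 := Nat.ceil_lt_add_one (by linarith)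
                    rw [div_lt_iff₀ (by positivity : (0:ℝ) < 5*N1)]
                    nlinarith [mul_lt_mul_of_pos_right
                      (show (⌈2*N1⌉₊:ℝ) < (5/2)*N1 by linarith) hgR]
                  · positivity
                  · exact le_rfl
  -- endpoint facts
  have haR : U - L ≤ (⌈U-L⌉₊:ℝ) := Nat.le_ceil _
  have hbR : (⌊U+L⌋₊:ℝ) ≤ U + L := Nat.floor_le (by linarith)
  have hcardI : ((I.card:ℕ):ℝ) ≤ 2*L + 1 := by
    rw [hI, Nat.card_Icc]
    rcases le_or_gt (⌈U-L⌉₊) (⌊U+L⌋₊ + 1) with h | h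
    · rw [Nat.cast_sub h]; push_cast; linarith
    · rw [Nat.sub_eq_zero_of_le h.le]; push_cast; linarith
  -- split into product sum, diagonal, off-diagonal
  have mainB : ∑ m1 ∈ I, ∑ m2 ∈ I, F (Nat.gcd m1 m2)
      = ∑ p ∈ I ×ˢ I, F (Nat.gcd p.1 p.2) := (Finset.sum_product' _ _ _).symm
  have hsplit : ∑ p ∈ I ×ˢ I, F (Nat.gcd p.1 p.2)
      = ∑ p ∈ (I ×ˢ I).filter (fun p => p.1 = p.2), F (Nat.gcd p.1 p.2)
        + ∑ p ∈ (I ×ˢ I).filter (fun p => ¬ p.1 = p.2), F (Nat.gcd p.1 p.2) :=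
    (Finset.sum_filter_add_sum_filter_not _ _ _).symm
  -- diagonal bound
  have hdiag : ∑ p ∈ (I ×ˢ I).filter (fun p => p.1 = p.2), F (Nat.gcd p.1 p.2)
      ≤ (2*L+1) * (10/U) := by
    have hcard2 : ((I ×ˢ I).filter (fun p => p.1 = p.2)).card ≤ I.card := by
      apply Finset.card_le_card_of_injOn (fun p => p.1)
      · intro p hp
        simp only [Finset.mem_coe, Finset.mem_filter, Finset.mem_product] at hp ⊢
        exact hp.1.1
      · intro p hp q hq hpq
        simp only [Finset.mem_coe, Finset.mem_filter, Finset.mem_product] at hp hq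
        have hpq' : p.1 = q.1 := hpq
        have h1 : p.2 = q.2 := by rw [← hp.2, ← hq.2]; exact hpq'
        exact Prod.ext hpq' h1
    have hterm : ∀ p ∈ (I ×ˢ I).filter (fun p => p.1 = p.2),
        F (Nat.gcd p.1 p.2) ≤ 10/U := by
      intro p hp
      simp only [Finset.mem_filter, Finset.mem_product] at hp
      obtain ⟨⟨h1, h2⟩, he⟩ := hp
      rw [← he, Nat.gcd_self]
      show (2/U) * (3*(p.1:ℝ)/U + (if U/(5*N1) < ((p.1:ℕ):ℝ) then 1/N1 else 0)) ≤ 10/U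
      have hp1 : (p.1:ℝ) ≤ U + L := (hmem_I p.1 h1).2
      have hite : (if U/(5*N1) < ((p.1:ℕ):ℝ) then 1/N1 else 0) ≤ 1/2 := by
        split_ifs
        · rw [div_le_div_iff₀ hN10 (by norm_num)]; linarith
        · linarith
      have h3 : 3*(p.1:ℝ)/U ≤ 9/2 := by
        rw [div_le_iff₀ hU0]; linarith
      have hsum5 : 3*(p.1:ℝ)/U + (if U/(5*N1) < ((p.1:ℕ):ℝ) then 1/N1 else 0) ≤ 5 := by
        linarith
      calc (2/U) * (3*(p.1:ℝ)/U + (if U/(5*N1) < ((p.1:ℕ):ℝ) then 1/N1 else 0))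
          ≤ (2/U) * 5 := mul_le_mul_of_nonneg_left hsum5 (by positivity)
        _ = 10/U := by ring
    calc ∑ p ∈ (I ×ˢ I).filter (fun p => p.1 = p.2), F (Nat.gcd p.1 p.2)
        ≤ ((I ×ˢ I).filter (fun p => p.1 = p.2)).card • (10/U) :=
          Finset.sum_le_card_nsmul _ _ _ hterm
      _ = (((I ×ˢ I).filter (fun p => p.1 = p.2)).card : ℝ) * (10/U) := nsmul_eq_mul _ _
      _ ≤ (2*L+1) * (10/U) := by
          apply mul_le_mul_of_nonneg_right _ (by positivity)
          calc (((I ×ˢ I).filter (fun p => p.1 = p.2)).card : ℝ) ≤ (I.card : ℝ) := by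
                exact_mod_cast hcard2
            _ ≤ 2*L+1 := hcardI
  -- off-diagonal bound
  set G := ⌊U+L⌋₊ - ⌈U-L⌉₊ with hGdef
  set P := (I ×ˢ I).filter (fun p => ¬ p.1 = p.2) with hPdef
  have hoff : ∑ p ∈ P, F (Nat.gcd p.1 p.2) ≤ 256*(L^2/U^2)*(1 + Real.log (2*U)) := by
    have hmemP : ∀ p ∈ P, p.1 ∈ I ∧ p.2 ∈ I ∧ p.1 ≠ p.2 := by
      intro p hp
      simp only [hPdef, Finset.mem_filter, Finset.mem_product] at hp
      exact ⟨hp.1.1, hp.1.2, hp.2⟩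
    have hgcdmem : ∀ p ∈ P, Nat.gcd p.1 p.2 ∈ Finset.Icc 1 G := by
      intro p hp
      obtain ⟨h1, h2, hne⟩ := hmemP p hp
      have hp1 : 1 ≤ p.1 := hmem_I1 _ h1
      have hp2 : 1 ≤ p.2 := hmem_I1 _ h2
      rw [hI, Finset.mem_Icc] at h1 h2
      rw [Finset.mem_Icc]
      refine ⟨Nat.gcd_pos_of_pos_left _ hp1, ?_⟩
      rcases Nat.lt_or_ge p.1 p.2 with hlt | hge
      · have hdvd : Nat.gcd p.1 p.2 ∣ p.2 - p.1 :=
          Nat.dvd_sub (Nat.gcd_dvd_right _ _) (Nat.gcd_dvd_left _ _)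
        have := Nat.le_of_dvd (by omega) hdvd
        omega
      · have hlt2 : p.2 < p.1 := by omega
        have hdvd : Nat.gcd p.1 p.2 ∣ p.1 - p.2 :=
          Nat.dvd_sub (Nat.gcd_dvd_left _ _) (Nat.gcd_dvd_right _ _)
        have := Nat.le_of_dvd (by omega) hdvd
        omega
    calc ∑ p ∈ P, F (Nat.gcd p.1 p.2)
        = ∑ p ∈ P, ∑ g ∈ Finset.Icc 1 G, (if g = Nat.gcd p.1 p.2 then F g else 0) := by
          apply Finset.sum_congr rfl; intro p hp
          rw [Finset.sum_ite_eq' (Finset.Icc 1 G) (Nat.gcd p.1 p.2) F,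
            if_pos (hgcdmem p hp)]
      _ ≤ ∑ p ∈ P, ∑ g ∈ Finset.Icc 1 G, (if g ∣ p.1 ∧ g ∣ p.2 then F g else 0) := by
          apply Finset.sum_le_sum; intro p hp
          apply Finset.sum_le_sum; intro g hg
          split_ifs with h1 h2
          · exact le_rfl
          · exact absurd ⟨h1 ▸ Nat.gcd_dvd_left _ _, h1 ▸ Nat.gcd_dvd_right _ _⟩ h2
          · exact hFnn g
          · exact le_rfl
      _ = ∑ g ∈ Finset.Icc 1 G, ∑ p ∈ P, (if g ∣ p.1 ∧ g ∣ p.2 then F g else 0) :=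
          Finset.sum_comm
      _ ≤ ∑ g ∈ Finset.Icc 1 G, 256*(L^2/U^2)*(1/(g:ℝ)) := by
          apply Finset.sum_le_sum; intro g hg
          rw [Finset.mem_Icc] at hg
          have hg1 : 1 ≤ g := hg.1
          have hgR : (0:ℝ) < g := by exact_mod_cast hg1
          have hgne : (g:ℝ) ≠ 0 := ne_of_gt hgR
          have hUne : U ≠ 0 := ne_of_gt hU0
          have hN1ne : N1 ≠ 0 := ne_of_gt hN10
          have hab : ⌈U-L⌉₊ ≤ ⌊U+L⌋₊ := by
            rcases le_or_gt ⌈U-L⌉₊ ⌊U+L⌋₊ with h | h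
            · exact h
            · exfalso; rw [hGdef] at hg; omega
          have hgle : (g:ℝ) ≤ 2*L := by
            have h1 : (g:ℝ) ≤ (G:ℝ) := by exact_mod_cast hg.2
            have h2 : (G:ℝ) = (⌊U+L⌋₊:ℝ) - (⌈U-L⌉₊:ℝ) := by
              rw [hGdef, Nat.cast_sub hab]
            linarith
          have hcount : ((I.filter (g ∣ ·)).card : ℝ) ≤ 4*L/g := by
            have hc1 := aux_count I g hg1 (U-L) (U+L) (by linarith) (by linarith) hmem_I
            have h2L : (1:ℝ) ≤ 2*L/g := by rw [le_div_iff₀ hgR]; linarith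
            calc ((I.filter (g ∣ ·)).card : ℝ) ≤ ((U+L) - (U-L))/g + 1 := hc1
              _ = 2*L/g + 1 := by ring_nf
              _ ≤ 2*L/g + 2*L/g := by linarith
              _ = 4*L/g := by ring
          have hsub : P.filter (fun p => g ∣ p.1 ∧ g ∣ p.2)
              ⊆ (I.filter (g ∣ ·)) ×ˢ (I.filter (g ∣ ·)) := by
            intro p hp
            simp only [hPdef, Finset.mem_filter, Finset.mem_product] at hp ⊢
            exact ⟨⟨hp.1.1.1, hp.2.1⟩, ⟨hp.1.1.2, hp.2.2⟩⟩
          calc ∑ p ∈ P, (if g ∣ p.1 ∧ g ∣ p.2 then F g else 0)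
              = (P.filter (fun p => g ∣ p.1 ∧ g ∣ p.2)).card • F g := by
                rw [← Finset.sum_filter, Finset.sum_const]
            _ = ((P.filter (fun p => g ∣ p.1 ∧ g ∣ p.2)).card : ℝ) * F g := nsmul_eq_mul _ _
            _ ≤ ((4*L/g)*(4*L/g)) * F g := by
                apply mul_le_mul_of_nonneg_right _ (hFnn g)
                calc ((P.filter (fun p => g ∣ p.1 ∧ g ∣ p.2)).card : ℝ)
                    ≤ (((I.filter (g ∣ ·)) ×ˢ (I.filter (g ∣ ·))).card : ℝ) := by
                      exact_mod_cast Finset.card_le_card hsub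
                  _ = ((I.filter (g ∣ ·)).card : ℝ) * ((I.filter (g ∣ ·)).card : ℝ) := by
                      rw [Finset.card_product]; push_cast; ring
                  _ ≤ (4*L/g)*(4*L/g) :=
                      mul_le_mul hcount hcount (by positivity) (by positivity)
            _ ≤ 256*(L^2/U^2)*(1/(g:ℝ)) := by
                show ((4*L/g)*(4*L/g)) * ((2/U) * (3*(g:ℝ)/U
                  + (if U/(5*N1) < (g:ℝ) then 1/N1 else 0))) ≤ _
                have hterm1 : ((4*L/g)*(4*L/g)) * ((2/U) * (3*(g:ℝ)/U))
                    = 96*(L^2/U^2)*(1/(g:ℝ)) := by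
                  field_simp
                  ring
                have hterm2 : ((4*L/g)*(4*L/g)) * ((2/U) *
                    (if U/(5*N1) < (g:ℝ) then 1/N1 else 0)) ≤ 160*(L^2/U^2)*(1/(g:ℝ)) := by
                  split_ifs with hc
                  · have hkey : U < 5*N1*(g:ℝ) := by
                      rw [div_lt_iff₀ (by positivity)] at hc
                      linarith
                    have e1 : ((4*L/g)*(4*L/g)) * ((2/U) * (1/N1)) = 32*L^2/(U*N1*g^2) := by
                      field_simp
                      ring
                    have e2 : 160*(L^2/U^2)*(1/(g:ℝ)) = 160*L^2/(U^2*g) := by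
                      field_simp
                    rw [e1, e2, div_le_div_iff₀ (by positivity) (by positivity)]
                    nlinarith [mul_le_mul_of_nonneg_left hkey.le
                      (show (0:ℝ) ≤ 32*L^2*U*(g:ℝ) by positivity)]
                  · rw [mul_zero, mul_zero]
                    positivity
                calc ((4*L/g)*(4*L/g)) * ((2/U) * (3*(g:ℝ)/U
                      + (if U/(5*N1) < (g:ℝ) then 1/N1 else 0)))
                    = ((4*L/g)*(4*L/g)) * ((2/U) * (3*(g:ℝ)/U))
                      + ((4*L/g)*(4*L/g)) * ((2/U) *
                        (if U/(5*N1) < (g:ℝ) then 1/N1 else 0)) := by ring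
                  _ ≤ 96*(L^2/U^2)*(1/(g:ℝ)) + 160*(L^2/U^2)*(1/(g:ℝ)) := by
                      rw [hterm1]
                      exact add_le_add_right hterm2 _
                  _ = 256*(L^2/U^2)*(1/(g:ℝ)) := by ring
      _ = 256*(L^2/U^2) * ∑ g ∈ Finset.Icc 1 G, (1:ℝ)/g := by rw [Finset.mul_sum]
      _ ≤ 256*(L^2/U^2)*(1 + Real.log (2*U)) := by
          apply mul_le_mul_of_nonneg_left _ (by positivity)
          calc ∑ g ∈ Finset.Icc 1 G, (1:ℝ)/g ≤ 1 + Real.log G := aux_harm G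
            _ ≤ 1 + Real.log (2*U) := by
                apply add_le_add_right
                rcases Nat.eq_zero_or_pos G with h0 | hG
                · rw [h0]
                  simp only [Nat.cast_zero, Real.log_zero]
                  exact Real.log_nonneg (by linarith)
                · apply Real.log_le_log (by exact_mod_cast hG)
                  have h1 : (G:ℝ) ≤ (⌊U+L⌋₊:ℝ) := by
                    exact_mod_cast Nat.sub_le _ _
                  linarith
  -- final numeric assembly
  have sqrtU1 : (1:ℝ) ≤ U ^ (1/2:ℝ) := Real.one_le_rpow (by linarith) (by norm_num)
  have sqrtU0 : (0:ℝ) ≤ U ^ (1/2:ℝ) := by linarith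
  set X := Real.log (N1*N2*U) with hX
  have h4N : (4:ℝ) ≤ N1*N2 := by
    nlinarith [mul_nonneg (by linarith : (0:ℝ) ≤ N1-2) (by linarith : (0:ℝ) ≤ N2-2)]
  have hX2 : (2:ℝ) ≤ X := by
    have h8 : (8:ℝ) ≤ N1*N2*U := by
      have := mul_le_mul h4N hU (by norm_num : (0:ℝ) ≤ 2) (by linarith : (0:ℝ) ≤ N1*N2)
      linarith
    have hmono := Real.log_le_log (by norm_num : (0:ℝ) < 8) h8
    have hlog8 : (2:ℝ) ≤ Real.log 8 := by
      have he : Real.log 8 = 3 * Real.log 2 := by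
        rw [show (8:ℝ) = 2^(3:ℕ) by norm_num, Real.log_pow]
        push_cast; ring
      rw [he]
      linarith [Real.log_two_gt_d9]
    linarith
  have hlog2U : Real.log (2*U) ≤ X := by
    apply Real.log_le_log (by linarith)
    nlinarith [mul_nonneg (by linarith : (0:ℝ) ≤ N1*N2-2) hU0.le]
  set Y := (L + U^(1/2:ℝ))/U with hY
  have hY0 : (0:ℝ) ≤ Y := by
    rw [hY]; positivity
  have hLY : L/U ≤ Y := by
    rw [hY]; gcongr; linarith
  have h1U : 1/U ≤ Y := by
    rw [hY]; gcongr; linarith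
  have hL2 : L^2/U^2 ≤ (1/2)*(L/U) := by
    have e : L^2/U^2 = (L/U)*(L/U) := by field_simp
    rw [e]
    have hLU2 : L/U ≤ 1/2 := by rw [div_le_iff₀ hU0]; linarith
    nlinarith [div_nonneg hL.le hU0.le]
  calc ∑ n1 ∈ J1, ∑ n2 ∈ J2, ∑ m1 ∈ I, ∑ m2 ∈ I,
        (if n1 * m1 = n2 * m2 then
          1 / ((n1 : ℝ) ^ (1/2 : ℝ) * (n2 : ℝ) ^ (1/2 : ℝ) *
               (m1 : ℝ) ^ (1/2 : ℝ) * (m2 : ℝ) ^ (1/2 : ℝ)) else 0)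
      ≤ ∑ m1 ∈ I, ∑ m2 ∈ I, F (Nat.gcd m1 m2) := mainA
    _ = ∑ p ∈ (I ×ˢ I).filter (fun p => p.1 = p.2), F (Nat.gcd p.1 p.2)
        + ∑ p ∈ P, F (Nat.gcd p.1 p.2) := by rw [mainB, hsplit]
    _ ≤ (2*L+1) * (10/U) + 256*(L^2/U^2)*(1 + Real.log (2*U)) := add_le_add hdiag hoff
    _ ≤ 30*Y + 128*Y*(1+X) := by
        have t1 : (2*L+1) * (10/U) ≤ 30*Y := by
          have e : (2*L+1) * (10/U) = 20*(L/U) + 10*(1/U) := by ring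
          rw [e]; linarith
        have t2 : 256*(L^2/U^2)*(1 + Real.log (2*U)) ≤ 128*Y*(1+X) := by
          have h1X : (0:ℝ) ≤ 1 + Real.log (2*U) := by
            have := Real.log_nonneg (show (1:ℝ) ≤ 2*U by linarith)
            linarith
          calc 256*(L^2/U^2)*(1 + Real.log (2*U))
              ≤ 256*((1/2)*(L/U))*(1 + Real.log (2*U)) := by
                apply mul_le_mul_of_nonneg_right _ h1X
                linarith
            _ = 128*(L/U)*(1 + Real.log (2*U)) := by ring
            _ ≤ 128*Y*(1+X) := by
                apply mul_le_mul
                · linarith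
                · linarith
                · exact h1X
                · linarith
        linarith
    _ ≤ 1000 * Y * X^2 := by
        have hscal : 30 + 128*(1+X) ≤ 1000*X^2 := by nlinarith
        calc 30*Y + 128*Y*(1+X) = Y * (30 + 128*(1+X)) := by ring
          _ ≤ Y * (1000*X^2) := mul_le_mul_of_nonneg_left hscal hY0
          _ = 1000 * Y * X^2 := by ring
end

section
/- Let U ≥ 2, 1/2 ≤ L ≤ U/2, and N(s) = Σ_{U-L ≤ n ≤ U+L} n^{-s}. Then for u ≥ 1, ∫₁^u |N(1/2 + it)|² dt ≪ u·L/U + L, with an absolute implied constant. -/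
open MeasureTheory Real Finset

section helpers

lemma integral_gauss_cos (b ν : ℝ) (hb : 0 < b) :
    ∫ t : ℝ, Real.exp (-b * t ^ 2) * Real.cos (ν * t)
      = Real.sqrt (π / b) * Real.exp (-ν ^ 2 / (4 * b)) := by
  have hbc : (0:ℝ) < ((b:ℂ)).re := by simpa using hb
  have key := fourierIntegral_gaussian hbc (ν : ℂ)
  have hint : Integrable (fun t : ℝ =>
      Complex.exp (Complex.I * (ν:ℂ) * (t:ℂ)) * Complex.exp (-(b:ℂ) * (t:ℂ) ^ 2)) := by
    have h := integrable_cexp_quadratic hbc (Complex.I * (ν:ℂ)) 0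
    refine h.congr (Filter.Eventually.of_forall fun t => ?_)
    simp only []
    rw [← Complex.exp_add]
    congr 1
    ring
  have hre : ∀ t : ℝ,
      (Complex.exp (Complex.I * (ν:ℂ) * (t:ℂ)) * Complex.exp (-(b:ℂ) * (t:ℂ) ^ 2)).re
        = Real.exp (-b * t ^ 2) * Real.cos (ν * t) := by
    intro t
    rw [← Complex.exp_add, Complex.exp_re]
    have h1 : (Complex.I * (ν:ℂ) * (t:ℂ) + -(b:ℂ) * (t:ℂ) ^ 2).re = -b * t ^ 2 := by
      simp [Complex.mul_re, Complex.mul_im, Complex.add_re, ← Complex.ofReal_pow]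
    have h2 : (Complex.I * (ν:ℂ) * (t:ℂ) + -(b:ℂ) * (t:ℂ) ^ 2).im = ν * t := by
      simp [Complex.mul_re, Complex.mul_im, Complex.add_im, ← Complex.ofReal_pow]
    rw [h1, h2]
  calc ∫ t : ℝ, Real.exp (-b * t ^ 2) * Real.cos (ν * t)
      = ∫ t : ℝ, (Complex.exp (Complex.I * (ν:ℂ) * (t:ℂ))
          * Complex.exp (-(b:ℂ) * (t:ℂ) ^ 2)).re := by
        refine integral_congr_ae (Filter.Eventually.of_forall fun t => ?_)
        exact (hre t).symm
    _ = (((π:ℂ) / (b:ℂ)) ^ ((1:ℂ)/2) * Complex.exp (-(ν:ℂ) ^ 2 / (4 * (b:ℂ)))).re := by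
        rw [← key]
        exact integral_re hint
    _ = Real.sqrt (π / b) * Real.exp (-ν ^ 2 / (4 * b)) := by
        have h3 : ((π:ℂ) / (b:ℂ)) ^ ((1:ℂ)/2) = ((Real.sqrt (π / b) : ℝ) : ℂ) := by
          rw [show (π:ℂ)/(b:ℂ) = ((π/b : ℝ):ℂ) by push_cast; ring,
            show ((1:ℂ)/2) = (((1/2 : ℝ)):ℂ) by norm_num,
            ← Complex.ofReal_cpow (by positivity)]
          norm_num [Real.sqrt_eq_rpow]
        have h4 : Complex.exp (-(ν:ℂ) ^ 2 / (4 * (b:ℂ)))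
            = ((Real.exp (-ν ^ 2 / (4 * b)) : ℝ) : ℂ) := by
          rw [show -(ν:ℂ)^2/(4*(b:ℂ)) = ((-ν^2/(4*b) : ℝ):ℂ) by push_cast; ring,
            Complex.ofReal_exp]
        rw [h3, h4, ← Complex.ofReal_mul, Complex.ofReal_re]

lemma sum_pow_dist_le (r : ℝ) (h0 : 0 ≤ r) (h1 : r < 1) (S : Finset ℕ) (n : ℕ) :
    ∑ m ∈ S, r ^ (Nat.dist n m) ≤ 2 / (1 - r) := by
  have hsum : Summable (fun k : ℕ => r ^ k) := summable_geometric_of_lt_one h0 h1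
  have htsum : ∑' k : ℕ, r ^ k = (1 - r)⁻¹ := tsum_geometric_of_lt_one h0 h1
  have hr1 : (0:ℝ) < 1 - r := by linarith
  have key : ∀ T : Finset ℕ, ∀ g : ℕ → ℕ, Set.InjOn g T →
      ∑ m ∈ T, r ^ (g m) ≤ (1 - r)⁻¹ := by
    intro T g hg
    rw [← Finset.sum_image (f := fun k => r ^ k) (g := g) (fun x hx y hy => hg hx hy)]
    rw [← htsum]
    exact Summable.sum_le_tsum _ (fun k _ => pow_nonneg h0 k) hsum
  rw [← Finset.sum_filter_add_sum_filter_not S (fun m => n ≤ m)]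
  have e1 : ∑ m ∈ S.filter (fun m => n ≤ m), r ^ (Nat.dist n m)
      = ∑ m ∈ S.filter (fun m => n ≤ m), r ^ (m - n) := by
    refine Finset.sum_congr rfl fun m hm => ?_
    rw [Nat.dist_eq_sub_of_le (Finset.mem_filter.mp hm).2]
  have e2 : ∑ m ∈ S.filter (fun m => ¬ n ≤ m), r ^ (Nat.dist n m)
      = ∑ m ∈ S.filter (fun m => ¬ n ≤ m), r ^ (n - m) := by
    refine Finset.sum_congr rfl fun m hm => ?_
    rw [Nat.dist_eq_sub_of_le_right (le_of_lt (Nat.lt_of_not_le (Finset.mem_filter.mp hm).2))]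
  rw [e1, e2]
  have i1 : ∑ m ∈ S.filter (fun m => n ≤ m), r ^ (m - n) ≤ (1 - r)⁻¹ := by
    refine key _ _ fun x hx y hy hxy => ?_
    have hx' := (Finset.mem_filter.mp hx).2
    have hy' := (Finset.mem_filter.mp hy).2
    omega
  have i2 : ∑ m ∈ S.filter (fun m => ¬ n ≤ m), r ^ (n - m) ≤ (1 - r)⁻¹ := by
    refine key _ _ fun x hx y hy hxy => ?_
    have hx' := (Finset.mem_filter.mp hx).2
    have hy' := (Finset.mem_filter.mp hy).2
    omega
  rw [div_eq_mul_inv]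
  linarith

lemma norm_sum_sq (S : Finset ℕ) (hS : ∀ n ∈ S, 1 ≤ n) (t : ℝ) :
    ‖∑ n ∈ S, (n:ℂ) ^ (-((1/2:ℂ) + Complex.I * (t:ℂ)))‖^2
      = ∑ n ∈ S, ∑ m ∈ S, Real.exp (-(Real.log n)/2) * Real.exp (-(Real.log m)/2)
          * Real.cos ((Real.log m - Real.log n) * t) := by
  have hz : ∀ n ∈ S, (n:ℂ) ^ (-((1/2:ℂ) + Complex.I * (t:ℂ)))
      = Complex.exp (((Real.log n : ℝ):ℂ) * (-((1/2:ℂ) + Complex.I * (t:ℂ)))) := by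
    intro n hn
    have hn1 : 1 ≤ n := hS n hn
    have hn0 : (n:ℂ) ≠ 0 := Nat.cast_ne_zero.mpr (by omega)
    rw [Complex.cpow_def_of_ne_zero hn0, Complex.natCast_log]
  rw [Finset.sum_congr rfl hz]
  set w := ∑ n ∈ S, Complex.exp (((Real.log n : ℝ):ℂ) * (-((1/2:ℂ) + Complex.I * (t:ℂ)))) with hw
  have h1 : ‖w‖^2 = (w * (starRingEnd ℂ) w).re := by
    rw [Complex.mul_conj]
    simp [Complex.sq_norm]
  rw [h1, hw, map_sum, Finset.sum_mul_sum, Complex.re_sum]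
  refine Finset.sum_congr rfl fun n hn => ?_
  rw [Complex.re_sum]
  refine Finset.sum_congr rfl fun m hm => ?_
  rw [← Complex.exp_conj, ← Complex.exp_add, Complex.exp_re]
  have hre : (((Real.log n : ℝ):ℂ) * (-((1/2:ℂ) + Complex.I * (t:ℂ)))
      + (starRingEnd ℂ) (((Real.log m : ℝ):ℂ) * (-((1/2:ℂ) + Complex.I * (t:ℂ))))).re
      = -(Real.log n)/2 + -(Real.log m)/2 := by
    simp [Complex.mul_re, Complex.mul_im, Complex.add_re, Complex.log_re, Complex.log_im,
      Complex.natCast_arg, Complex.norm_natCast]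
    ring
  have him : (((Real.log n : ℝ):ℂ) * (-((1/2:ℂ) + Complex.I * (t:ℂ)))
      + (starRingEnd ℂ) (((Real.log m : ℝ):ℂ) * (-((1/2:ℂ) + Complex.I * (t:ℂ))))).im
      = (Real.log m - Real.log n) * t := by
    simp [Complex.mul_re, Complex.mul_im, Complex.add_im, Complex.log_re, Complex.log_im,
      Complex.natCast_arg, Complex.norm_natCast]
    ring
  rw [hre, him, Real.exp_add]

lemma Gterm_integrable (c νv b : ℝ) (hb : 0 < b) :
    Integrable (fun t : ℝ => c * Real.cos (νv * t) * (Real.exp 1 * Real.exp (-b * t^2))) := by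
  have hg : Integrable (fun t : ℝ => Real.exp (-b*t^2)) := integrable_exp_neg_mul_sq hb
  refine Integrable.mono' (hg.const_mul (|c| * Real.exp 1)) ?_ ?_
  · apply Continuous.aestronglyMeasurable
    fun_prop
  · refine Filter.Eventually.of_forall fun t => ?_
    have h1 : |Real.cos (νv * t)| ≤ 1 := Real.abs_cos_le_one _
    have h2 : (0:ℝ) < Real.exp (-b*t^2) := Real.exp_pos _
    have h3 : (0:ℝ) < Real.exp 1 := Real.exp_pos _
    rw [Real.norm_eq_abs, abs_mul, abs_mul, abs_mul, abs_of_pos h3, abs_of_pos h2]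
    calc |c| * |Real.cos (νv * t)| * (Real.exp 1 * Real.exp (-b * t^2))
        ≤ |c| * (Real.exp 1 * Real.exp (-b * t^2)) :=
          mul_le_mul_of_nonneg_right (mul_le_of_le_one_right (abs_nonneg c) h1) (by positivity)
      _ = |c| * Real.exp 1 * Real.exp (-b * t^2) := by ring

lemma Gterm_integral (c νv b : ℝ) (hb : 0 < b)
    (hgauss : ∫ t : ℝ, Real.exp (-b * t ^ 2) * Real.cos (νv * t)
      = Real.sqrt (π / b) * Real.exp (-νv ^ 2 / (4 * b))) :
    (∫ t : ℝ, c * Real.cos (νv * t) * (Real.exp 1 * Real.exp (-b * t^2)))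
      = c * Real.exp 1 * (Real.sqrt (π/b) * Real.exp (-νv^2/(4*b))) := by
  have h : (fun t : ℝ => c * Real.cos (νv * t) * (Real.exp 1 * Real.exp (-b * t^2)))
      = fun t => (c * Real.exp 1) * (Real.exp (-b*t^2) * Real.cos (νv * t)) := by
    funext t
    ring
  rw [h, MeasureTheory.integral_const_mul, hgauss]

end helpers

set_option maxHeartbeats 2000000 in
theorem stmt_16 :
    ∃ C : ℝ, 0 < C ∧ ∀ U L u : ℝ, 2 ≤ U → 1/2 ≤ L → L ≤ U / 2 → 1 ≤ u →
      (∫ t in (1:ℝ)..u,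
          ‖∑ n ∈ Finset.Icc ⌈U - L⌉₊ ⌊U + L⌋₊,
              (n : ℂ) ^ (-((1/2 : ℂ) + Complex.I * (t : ℂ)))‖ ^ 2)
        ≤ C * (u * L / U + L) := by
  refine ⟨1000, by norm_num, fun U L u hU hL hLU hu => ?_⟩
  set A := ⌈U - L⌉₊ with hAdef
  set B := ⌊U + L⌋₊ with hBdef
  set S := Finset.Icc A B with hSdef
  have hU0 : (0:ℝ) < U := by linarith
  have hu0 : (0:ℝ) < u := by linarith
  have hL0 : (0:ℝ) < L := by linarith
  have hU21 : (1:ℝ) ≤ U/2 := by linarith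
  have hAge : U - L ≤ (A:ℝ) := Nat.le_ceil _
  have hBle : (B:ℝ) ≤ U + L := Nat.floor_le (by linarith)
  have hmemS : ∀ n ∈ S, 1 ≤ n ∧ U/2 ≤ (n:ℝ) ∧ (n:ℝ) ≤ 2*U := by
    intro n hn
    obtain ⟨h1, h2⟩ := Finset.mem_Icc.mp hn
    have hAn : (A:ℝ) ≤ (n:ℝ) := Nat.cast_le.mpr h1
    have hnB : (n:ℝ) ≤ (B:ℝ) := Nat.cast_le.mpr h2
    have hU2n : U/2 ≤ (n:ℝ) := by linarith
    have h1n : (1:ℝ) ≤ (n:ℝ) := by linarith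
    exact ⟨by exact_mod_cast h1n, hU2n, by linarith⟩
  set a : ℕ → ℝ := fun n => Real.exp (-(Real.log n)/2) with hadef
  set ν : ℕ → ℕ → ℝ := fun n m => Real.log m - Real.log n with hνdef
  set b : ℝ := 1/u^2 with hbdef
  have hb : 0 < b := by positivity
  set F : ℝ → ℝ := fun t => ∑ n ∈ S, ∑ m ∈ S, a n * a m * Real.cos (ν n m * t) with hFdef
  have hexp : ∀ t : ℝ, ‖∑ n ∈ S, (n:ℂ) ^ (-((1/2:ℂ) + Complex.I * (t:ℂ)))‖^2 = F t :=
    fun t => norm_sum_sq S (fun n hn => (hmemS n hn).1) t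
  have hFc : Continuous F := by
    apply continuous_finset_sum
    intro n _
    apply continuous_finset_sum
    intro m _
    exact continuous_const.mul (Real.continuous_cos.comp (continuous_const.mul continuous_id))
  have hF0 : ∀ t, 0 ≤ F t := fun t => by rw [← hexp t]; positivity
  have hsplit : (fun t => F t * (Real.exp 1 * Real.exp (-b * t^2)))
      = (fun t => ∑ n ∈ S, ∑ m ∈ S,
          a n * a m * Real.cos (ν n m * t) * (Real.exp 1 * Real.exp (-b * t^2))) := by
    funext t
    simp only [hFdef, Finset.sum_mul]
  have hFKint : Integrable (fun t => F t * (Real.exp 1 * Real.exp (-b * t^2))) := by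
    rw [hsplit]
    exact integrable_finset_sum _ fun n _ =>
      integrable_finset_sum _ fun m _ => Gterm_integrable (a n * a m) (ν n m) b hb
  -- Step 1
  have step1 : (∫ t in (1:ℝ)..u, ‖∑ n ∈ S, (n:ℂ) ^ (-((1/2:ℂ) + Complex.I * (t:ℂ)))‖^2)
      ≤ ∫ t : ℝ, F t * (Real.exp 1 * Real.exp (-b * t^2)) := by
    have e1 : (∫ t in (1:ℝ)..u, ‖∑ n ∈ S, (n:ℂ) ^ (-((1/2:ℂ) + Complex.I * (t:ℂ)))‖^2)
        = ∫ t in (1:ℝ)..u, F t := intervalIntegral.integral_congr fun t _ => hexp t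
    rw [e1]
    have i2 : (∫ t in (1:ℝ)..u, F t)
        ≤ ∫ t in (1:ℝ)..u, F t * (Real.exp 1 * Real.exp (-b * t^2)) := by
      apply intervalIntegral.integral_mono_on hu (hFc.intervalIntegrable 1 u)
        hFKint.intervalIntegrable
      intro t ht
      have h1t : 1 ≤ t := ht.1
      have htu : t ≤ u := ht.2
      have hK1 : 1 ≤ Real.exp 1 * Real.exp (-b * t^2) := by
        rw [← Real.exp_add]
        apply Real.one_le_exp
        have hbt : b * t^2 ≤ 1 := by
          rw [hbdef, div_mul_eq_mul_div, one_mul, div_le_one (by positivity)]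
          nlinarith
        linarith
      nlinarith [hF0 t]
    refine i2.trans ?_
    rw [intervalIntegral.integral_of_le hu]
    exact setIntegral_le_integral hFKint
      (Filter.Eventually.of_forall fun t => mul_nonneg (hF0 t) (by positivity))
  -- Step 2
  have step2 : (∫ t : ℝ, F t * (Real.exp 1 * Real.exp (-b * t^2)))
      = ∑ n ∈ S, ∑ m ∈ S,
          a n * a m * Real.exp 1 * (Real.sqrt (π/b) * Real.exp (-(ν n m)^2/(4*b))) := by
    rw [hsplit, integral_finset_sum _ (fun n _ =>
      integrable_finset_sum _ (fun m _ => Gterm_integrable (a n * a m) (ν n m) b hb))]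
    refine Finset.sum_congr rfl fun n _ => ?_
    rw [integral_finset_sum _ (fun m _ => Gterm_integrable (a n * a m) (ν n m) b hb)]
    exact Finset.sum_congr rfl fun m _ =>
      Gterm_integral (a n * a m) (ν n m) b hb (integral_gauss_cos b (ν n m) hb)
  -- geometric setup
  set s : ℝ := u/(4*U) with hsdef
  have hs0 : 0 < s := by positivity
  set r : ℝ := Real.exp (-(2*s)) with hrdef
  have hr0 : (0:ℝ) ≤ r := le_of_lt (Real.exp_pos _)
  have hr1 : r < 1 := by
    rw [hrdef, Real.exp_lt_one_iff]
    linarith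
  have h1r0 : (0:ℝ) < 1 - r := by
    have hx : 2*s + 1 ≤ Real.exp (2*s) := Real.add_one_le_exp _
    have : r ≤ 1/(1+2*s) := by
      rw [hrdef, Real.exp_neg, ← one_div]
      apply one_div_le_one_div_of_le (by linarith)
      linarith
    have h0 : (0:ℝ) < 2*s/(1+2*s) := by positivity
    have heq : 1 - 1/(1+2*s) = 2*s/(1+2*s) := by field_simp; ring
    linarith
  -- log gap lemma
  have hlog2 : ∀ p ∈ S, ∀ q ∈ S, p ≤ q →
      ((q:ℝ) - p)/(2*U) ≤ Real.log q - Real.log p := by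
    intro p hp q hq hpq
    obtain ⟨hp1, hp2, hp3⟩ := hmemS p hp
    obtain ⟨hq1, hq2, hq3⟩ := hmemS q hq
    have hp0 : (0:ℝ) < p := by linarith
    have hq0 : (0:ℝ) < q := by linarith
    have hpq' : (p:ℝ) ≤ q := Nat.cast_le.mpr hpq
    have h1 : Real.log ((p:ℝ)/q) ≤ (p:ℝ)/q - 1 :=
      Real.log_le_sub_one_of_pos (by positivity)
    rw [Real.log_div (ne_of_gt hp0) (ne_of_gt hq0)] at h1
    have h3 : ((q:ℝ)-p)/(2*U) ≤ 1 - (p:ℝ)/q := by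
      rw [div_le_iff₀ (by positivity)]
      have he : 1 - (p:ℝ)/q = ((q:ℝ)-p)/q := by field_simp
      rw [he, div_mul_eq_mul_div, le_div_iff₀ hq0]
      nlinarith
    linarith
  -- per-term bound
  have hterm : ∀ n ∈ S, ∀ m ∈ S,
      a n * a m * Real.exp 1 * (Real.sqrt (π/b) * Real.exp (-(ν n m)^2/(4*b)))
        ≤ (2/U) * Real.exp 1 * ((2*u) * (Real.exp 1 * r ^ (Nat.dist n m))) := by
    intro n hn m hm
    obtain ⟨hn1, hn2, hn3⟩ := hmemS n hn
    obtain ⟨hm1, hm2, hm3⟩ := hmemS m hm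
    have haa : a n * a m ≤ 2/U := by
      rw [hadef]
      simp only
      rw [← Real.exp_add]
      have h2U : Real.exp (-(Real.log (U/2))) = 2/U := by
        rw [Real.exp_neg, Real.exp_log (by linarith), inv_div]
      rw [← h2U]
      apply Real.exp_le_exp.mpr
      have hlogn : Real.log (U/2) ≤ Real.log n := Real.log_le_log (by linarith) hn2
      have hlogm : Real.log (U/2) ≤ Real.log m := Real.log_le_log (by linarith) hm2
      linarith
    have hsqrt : Real.sqrt (π/b) ≤ 2*u := by
      rw [hbdef]
      rw [show π/(1/u^2) = π * u^2 by field_simp]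
      have h4 : π * u^2 ≤ (2*u)^2 := by nlinarith [Real.pi_le_four]
      calc Real.sqrt (π*u^2) ≤ Real.sqrt ((2*u)^2) := Real.sqrt_le_sqrt h4
        _ = 2*u := Real.sqrt_sq (by linarith)
    have hgfac : Real.exp (-(ν n m)^2/(4*b)) ≤ Real.exp 1 * r ^ (Nat.dist n m) := by
      have hd : ((Nat.dist n m : ℕ):ℝ)/(2*U) ≤ |ν n m| := by
        rcases le_total n m with h | h
        · have hdd : ((Nat.dist n m : ℕ):ℝ) = (m:ℝ) - n := by
            rw [Nat.dist_eq_sub_of_le h, Nat.cast_sub h]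
          rw [hdd]
          exact (hlog2 n hn m hm h).trans (le_abs_self _)
        · have hdd : ((Nat.dist n m : ℕ):ℝ) = (n:ℝ) - m := by
            rw [Nat.dist_eq_sub_of_le_right h, Nat.cast_sub h]
          rw [hdd]
          refine (hlog2 m hm n hn h).trans ?_
          rw [hνdef]
          simp only
          rw [abs_sub_comm]
          exact le_abs_self _
      have hsq : (((Nat.dist n m : ℕ):ℝ)/(2*U))^2 ≤ (ν n m)^2 := by
        calc (((Nat.dist n m : ℕ):ℝ)/(2*U))^2 ≤ |ν n m|^2 :=
              pow_le_pow_left₀ (by positivity) hd 2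
          _ = (ν n m)^2 := sq_abs _
      have hb4 : (ν n m)^2/(4*b) = (u/2)^2 * (ν n m)^2 := by
        rw [hbdef]
        field_simp
        ring
      have hfin : (s*((Nat.dist n m : ℕ):ℝ))^2 ≤ (ν n m)^2/(4*b) := by
        rw [hb4, show (s*((Nat.dist n m : ℕ):ℝ))^2
            = (u/2)^2 * ((((Nat.dist n m : ℕ):ℝ))/(2*U))^2 by rw [hsdef]; field_simp; ring]
        exact mul_le_mul_of_nonneg_left hsq (by positivity)
      have hrpow : Real.exp 1 * r ^ (Nat.dist n m)
          = Real.exp (1 + ((Nat.dist n m : ℕ):ℝ) * (-(2*s))) := by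
        rw [Real.exp_add, Real.exp_nat_mul, hrdef]
      rw [hrpow]
      apply Real.exp_le_exp.mpr
      have h2sd : ((Nat.dist n m : ℕ):ℝ) * -(2*s) = -(2*(s*((Nat.dist n m : ℕ):ℝ))) := by ring
      rw [h2sd]
      have e2 : 2*(s*((Nat.dist n m : ℕ):ℝ)) ≤ 1 + (s*((Nat.dist n m : ℕ):ℝ))^2 := by
        nlinarith [sq_nonneg (s*((Nat.dist n m : ℕ):ℝ) - 1)]
      have e3 : -(ν n m ^2/(4*b)) ≤ -(s*((Nat.dist n m : ℕ):ℝ))^2 := neg_le_neg hfin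
      have e4 : -(ν n m ^2)/(4*b) = -(ν n m ^2/(4*b)) := by ring
      rw [e4]
      linarith
    have h1 : a n * a m * Real.exp 1 ≤ (2/U) * Real.exp 1 :=
      mul_le_mul_of_nonneg_right haa (le_of_lt (Real.exp_pos 1))
    have h2 : Real.sqrt (π/b) * Real.exp (-(ν n m)^2/(4*b))
        ≤ (2*u) * (Real.exp 1 * r ^ (Nat.dist n m)) :=
      mul_le_mul hsqrt hgfac (le_of_lt (Real.exp_pos _)) (by positivity)
    exact mul_le_mul h1 h2 (by positivity) (by positivity)
  -- sum the bound
  have hsum : ∑ n ∈ S, ∑ m ∈ S,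
        a n * a m * Real.exp 1 * (Real.sqrt (π/b) * Real.exp (-(ν n m)^2/(4*b)))
      ≤ (S.card : ℝ) * ((2/U) * Real.exp 1 * (2*u) * Real.exp 1 * (2/(1-r))) := by
    calc ∑ n ∈ S, ∑ m ∈ S,
          a n * a m * Real.exp 1 * (Real.sqrt (π/b) * Real.exp (-(ν n m)^2/(4*b)))
        ≤ ∑ n ∈ S, ∑ m ∈ S, (2/U) * Real.exp 1 * ((2*u) * (Real.exp 1 * r ^ (Nat.dist n m))) :=
          Finset.sum_le_sum fun n hn => Finset.sum_le_sum fun m hm => hterm n hn m hm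
      _ = ∑ n ∈ S, ((2/U) * Real.exp 1 * (2*u) * Real.exp 1) * ∑ m ∈ S, r ^ (Nat.dist n m) := by
          refine Finset.sum_congr rfl fun n _ => ?_
          rw [Finset.mul_sum]
          exact Finset.sum_congr rfl fun m _ => by ring
      _ ≤ ∑ n ∈ S, ((2/U) * Real.exp 1 * (2*u) * Real.exp 1) * (2/(1-r)) :=
          Finset.sum_le_sum fun n _ => mul_le_mul_of_nonneg_left
            (sum_pow_dist_le r hr0 hr1 S n) (by positivity)
      _ = (S.card : ℝ) * ((2/U) * Real.exp 1 * (2*u) * Real.exp 1 * (2/(1-r))) := by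
          rw [Finset.sum_const, nsmul_eq_mul]
  have hcard : (S.card : ℝ) ≤ 2*L + 1 := by
    rw [hSdef, Nat.card_Icc]
    rcases le_or_gt A (B+1) with h | h
    · rw [Nat.cast_sub h]
      push_cast
      linarith
    · rw [Nat.sub_eq_zero_of_le (by omega)]
      push_cast
      linarith
  have hgeom : 2/(1-r) ≤ 4*U/u + 2 := by
    have hx : 2*s + 1 ≤ Real.exp (2*s) := Real.add_one_le_exp _
    have hrle : r ≤ 1/(1+2*s) := by
      rw [hrdef, Real.exp_neg, ← one_div]
      apply one_div_le_one_div_of_le (by linarith)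
      linarith
    have heq : 1 - 1/(1+2*s) = 2*s/(1+2*s) := by field_simp; ring
    have h1r : 2*s/(1+2*s) ≤ 1 - r := by linarith
    have h1r0 : (0:ℝ) < 1 - r := by linarith
    rw [div_le_iff₀ h1r0]
    have h4Uu : 4*U/u = 1/s := by rw [hsdef]; field_simp
    rw [h4Uu]
    have key2 : (1/s + 2) * (2*s/(1+2*s)) = 2 := by field_simp
    nlinarith [mul_le_mul_of_nonneg_left h1r (show (0:ℝ) ≤ 1/s+2 by positivity)]
  -- final assembly
  have hE3 : Real.exp 1 ≤ 3 := by
    have := Real.exp_one_lt_d9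
    linarith
  have hE0 : (0:ℝ) < Real.exp 1 := Real.exp_pos 1
  calc (∫ t in (1:ℝ)..u, ‖∑ n ∈ S, (n:ℂ) ^ (-((1/2:ℂ) + Complex.I * (t:ℂ)))‖^2)
      ≤ ∫ t : ℝ, F t * (Real.exp 1 * Real.exp (-b * t^2)) := step1
    _ = ∑ n ∈ S, ∑ m ∈ S,
          a n * a m * Real.exp 1 * (Real.sqrt (π/b) * Real.exp (-(ν n m)^2/(4*b))) := step2
    _ ≤ (S.card : ℝ) * ((2/U) * Real.exp 1 * (2*u) * Real.exp 1 * (2/(1-r))) := hsum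
    _ ≤ (2*L+1) * ((2/U) * Real.exp 1 * (2*u) * Real.exp 1 * (4*U/u + 2)) := by
        have hc0 : (0:ℝ) ≤ (2/U) * Real.exp 1 * (2*u) * Real.exp 1 * (2/(1-r)) :=
          mul_nonneg (by positivity) (div_nonneg (by norm_num) h1r0.le)
        apply mul_le_mul hcard _ hc0 (by linarith)
        apply mul_le_mul_of_nonneg_left hgeom (by positivity)
    _ ≤ 1000 * (u * L / U + L) := by
        have hsimp : (2/U) * Real.exp 1 * (2*u) * Real.exp 1 * (4*U/u + 2)
            = Real.exp 1 * Real.exp 1 * (16 + 8*(u/U)) := by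
          field_simp
          ring
        rw [hsimp]
        have h9 : Real.exp 1 * Real.exp 1 ≤ 9 := by nlinarith
        have h4L : 2*L+1 ≤ 4*L := by linarith
        have hx0 : (0:ℝ) ≤ u/U := by positivity
        have hxL : (u/U)*L = u*L/U := by ring
        calc (2*L+1) * (Real.exp 1 * Real.exp 1 * (16 + 8*(u/U)))
            ≤ (4*L) * (9 * (16 + 8*(u/U))) := by
              apply mul_le_mul h4L (mul_le_mul_of_nonneg_right h9 (by positivity))
                (by positivity) (by positivity)
          _ = 576*L + 288*((u/U)*L) := by ring
          _ ≤ 1000 * (u*L/U + L) := by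
              rw [hxL]
              nlinarith [mul_nonneg hx0 (le_of_lt hL0), hxL ▸ mul_nonneg hx0 (le_of_lt hL0)]
end
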